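/- Let k be a commutative unital ring, N ≥ 1, and let G = ℤ^N be the free abelian group of rank N (written multiplicatively). For every d ∈ ℕ, the quotient ring k[G] / I_k(G)^{d+1} of the monoid algebra by the (d+1)-st power of the augmentation ideal is a free k-module of rank Σ_{j=0}^{d} C(N+j−1, j). -/

import Mathlib

/-!
Sending `e_i` to `1 + X_i` and `X_i` to `e_i - 1` gives mutually inverse `k`-algebra maps between
`k[ℤ^σ] / I^n` and `k[X_σ] / (X)^n`. The elements `1 + X_i` are units of the truncated polynomial
ring because `X_i` is nilpotent there, and each map sends its ideal into the image of the other
ideal, whose `n`-th power vanishes in the target. The truncated polynomial ring is free on the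
monomials of total degree `< n`, and there are `C(N + j - 1, j)` monomials of degree `j` in `N`
variables.
-/

/-- The augmentation ideal of the monoid algebra `k[G]`, i.e. the kernel of the
`k`-algebra homomorphism `k[G] → k` sending each `g ∈ G` to `1`, regarded as a
`k`-submodule of `k[G]`. -/
noncomputable def augIdeal (k : Type*) [CommRing k] (G : Type*) [Monoid G] :
    Submodule k (MonoidAlgebra k G) :=
  Submodule.restrictScalars k (RingHom.ker (MonoidAlgebra.lift k k G 1))

/-- The `d`-th power of the augmentation ideal of `k[G]` (with the usual ideal-theoretic
convention that the zeroth power is the whole ring). -/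
noncomputable def augPow (k : Type*) [CommRing k] (G : Type*) [Monoid G] :
    ℕ → Submodule k (MonoidAlgebra k G)
  | 0 => ⊤
  | d + 1 => augIdeal k G ^ (d + 1)

open MvPolynomial

theorem Ideal.pow_le_ker_of_map_le_map_mk {A B : Type*} [CommRing A] [CommRing B]
    {I : Ideal A} {J : Ideal B} {n : ℕ} {f : A →+* B ⧸ J ^ n}
    (h : I.map f ≤ J.map (Ideal.Quotient.mk (J ^ n))) : I ^ n ≤ RingHom.ker f := by
  rw [← Ideal.map_eq_bot_iff_le_ker, Ideal.map_pow, eq_bot_iff]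
  calc (I.map f) ^ n ≤ (J.map (Ideal.Quotient.mk (J ^ n))) ^ n := Ideal.pow_right_mono h n
    _ = ⊥ := by rw [← Ideal.map_pow, Ideal.map_quotient_self]

namespace MonoidAlgebra

noncomputable def augmentationIdeal (k G : Type*) [CommRing k] [Monoid G] :
    Ideal (MonoidAlgebra k G) :=
  RingHom.ker (lift k k G 1)

variable {k G : Type*} [CommRing k] [Monoid G]

theorem of_sub_one_mem_augmentationIdeal (g : G) : of k G g - 1 ∈ augmentationIdeal k G := by
  simp [augmentationIdeal, RingHom.mem_ker]

theorem lift_mem_of_mem_augmentationIdeal {B : Type*} [CommRing B] [Algebra k B] {φ : G →* B}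
    {K : Ideal B} (hφ : ∀ g, Ideal.Quotient.mk K (φ g) = 1) {x : MonoidAlgebra k G}
    (hx : x ∈ augmentationIdeal k G) : lift k B G φ x ∈ K := by
  have hcomm : (Ideal.Quotient.mkₐ k K).comp (lift k B G φ) =
      (Algebra.ofId k (B ⧸ K)).comp (lift k k G 1) :=
    algHom_ext (fun g => by simp [hφ]) (Subsingleton.elim _ _)
  rw [← Ideal.Quotient.eq_zero_iff_mem]
  simpa [RingHom.mem_ker.mp hx] using congr($hcomm x)

end MonoidAlgebra

section FreeAbelian

variable {σ M : Type*} [Fintype σ] [DecidableEq σ]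

def zpowProdHom [CommGroup M] (u : σ → M) : Multiplicative (σ → ℤ) →* M where
  toFun g := ∏ i, u i ^ g.toAdd i
  map_one' := by simp
  map_mul' g h := by simp [zpow_add, Finset.prod_mul_distrib]

theorem zpowProdHom_ofAdd_single [CommGroup M] (u : σ → M) (i : σ) :
    zpowProdHom u (.ofAdd (Pi.single i 1)) = u i := by
  simp [zpowProdHom, Pi.single_apply]

theorem MonoidHom.ext_ofAdd_single [CommMonoid M] {f g : Multiplicative (σ → ℤ) →* M}
    (h : ∀ i, f (.ofAdd (Pi.single i 1)) = g (.ofAdd (Pi.single i 1))) : f = g :=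
  AddMonoidHom.toMultiplicativeLeft.symm.injective <| AddMonoidHom.functions_ext' _ _ _ fun i =>
    AddMonoidHom.ext_int (congrArg Additive.ofMul (h i))

end FreeAbelian

theorem MvPolynomial.isCompl_restrictSupport {σ R : Type*} [CommSemiring R] (s : Set (σ →₀ ℕ)) :
    IsCompl (restrictSupport R s) (restrictSupport R sᶜ) :=
  (Submodule.orderIsoMapComap (AddMonoidAlgebra.coeffLinearEquiv (M := σ →₀ ℕ) R)).symm.isCompl
    ⟨Finsupp.disjoint_supported_supported disjoint_compl_right,
      Finsupp.codisjoint_supported_supported isCompl_compl.codisjoint⟩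

noncomputable def MvPolynomial.basisQuotientPowIdealOfVars (σ R : Type*) [CommRing R] (d : ℕ) :
    Module.Basis {x : σ →₀ ℕ | x.degree ≤ d} R (MvPolynomial σ R ⧸ idealOfVars σ R ^ (d + 1)) :=
  have h : IsCompl ((idealOfVars σ R ^ (d + 1)).restrictScalars R)
      (restrictSupport R {x : σ →₀ ℕ | x.degree ≤ d}) := by
    rw [pow_idealOfVars, restrictScalars_restrictSupportIdeal]
    convert (isCompl_restrictSupport (R := R) {x : σ →₀ ℕ | x.degree ≤ d}).symm
    ext x
    simp
  (basisRestrictSupport R _).map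
    ((Submodule.quotientEquivOfIsCompl _ _ h).symm ≪≫ₗ Submodule.Quotient.restrictScalarsEquiv R _)

theorem Finsupp.natCard_degree_le (σ : Type*) [Fintype σ] [DecidableEq σ] (d : ℕ) :
    Nat.card {x : σ →₀ ℕ | x.degree ≤ d} =
      ∑ j ∈ Finset.range (d + 1), (Fintype.card σ + j - 1).choose j := by
  have hS : {x : σ →₀ ℕ | x.degree ≤ d} =
      ↑((Finset.range (d + 1)).biUnion fun j => (Finset.univ : Finset σ).finsuppAntidiag j) := by
    ext x
    simp [Finsupp.degree_eq_sum]
  rw [hS, Nat.card_coe_set_eq, Set.ncard_coe_finset, Finset.card_biUnion]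
  · simp [Finset.card_finsuppAntidiag_nat_eq_choose]
  · intro i _ j _ hij
    exact Finset.disjoint_left.mpr fun x hi hj =>
      hij ((Finset.mem_finsuppAntidiag.mp hi).1.symm.trans (Finset.mem_finsuppAntidiag.mp hj).1)

section TruncatedAlgebras

open MonoidAlgebra

variable (k σ : Type*) [CommRing k] (n : ℕ)

abbrev TruncatedMvPolynomial := MvPolynomial σ k ⧸ idealOfVars σ k ^ n

abbrev TruncatedGroupAlgebra :=
  MonoidAlgebra k (Multiplicative (σ → ℤ)) ⧸ augmentationIdeal k (Multiplicative (σ → ℤ)) ^ n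

theorem MvPolynomial.isNilpotent_mk_X (i : σ) :
    IsNilpotent (Ideal.Quotient.mk (idealOfVars σ k ^ n) (X i)) :=
  ⟨n, by
    rw [← map_pow, Ideal.Quotient.eq_zero_iff_mem]
    exact Ideal.pow_mem_pow (Ideal.subset_span (Set.mem_range_self i)) n⟩

noncomputable def oneAddXUnit (i : σ) : (TruncatedMvPolynomial k σ n)ˣ :=
  (isNilpotent_mk_X k σ n i).isUnit_one_add.unit

theorem val_oneAddXUnit (i : σ) :
    (oneAddXUnit k σ n i : TruncatedMvPolynomial k σ n) = 1 + Ideal.Quotient.mk _ (X i) :=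
  rfl

section

variable [Fintype σ]

noncomputable def toTruncatedMvPolynomial :
    MonoidAlgebra k (Multiplicative (σ → ℤ)) →ₐ[k] TruncatedMvPolynomial k σ n :=
  lift k _ _ ((Units.coeHom _).comp (zpowProdHom (oneAddXUnit k σ n)))

theorem toTruncatedMvPolynomial_of (g : Multiplicative (σ → ℤ)) :
    toTruncatedMvPolynomial k σ n (of k _ g) = zpowProdHom (oneAddXUnit k σ n) g :=
  lift_of _ g

end

variable [DecidableEq σ]

noncomputable def toTruncatedGroupAlgebra : MvPolynomial σ k →ₐ[k] TruncatedGroupAlgebra k σ n :=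
  aeval fun i => Ideal.Quotient.mk _ (of k _ (.ofAdd (Pi.single i 1)) - 1)

theorem map_idealOfVars_toTruncatedGroupAlgebra_le :
    (idealOfVars σ k).map (toTruncatedGroupAlgebra k σ n) ≤
      (augmentationIdeal k (Multiplicative (σ → ℤ))).map
        (Ideal.Quotient.mk (augmentationIdeal k (Multiplicative (σ → ℤ)) ^ n)) := by
  rw [idealOfVars, Ideal.map_span, Ideal.span_le]
  rintro _ ⟨_, ⟨i, rfl⟩, rfl⟩
  simp only [toTruncatedGroupAlgebra, aeval_X, SetLike.mem_coe]
  exact Ideal.mem_map_of_mem _ (of_sub_one_mem_augmentationIdeal _)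

noncomputable def truncatedToGroupAlgebra :
    TruncatedMvPolynomial k σ n →ₐ[k] TruncatedGroupAlgebra k σ n :=
  Ideal.Quotient.liftₐ _ (toTruncatedGroupAlgebra k σ n) fun _ ha =>
    Ideal.pow_le_ker_of_map_le_map_mk (map_idealOfVars_toTruncatedGroupAlgebra_le k σ n) ha

theorem truncatedToGroupAlgebra_mk_X (i : σ) :
    truncatedToGroupAlgebra k σ n (Ideal.Quotient.mk _ (X i)) =
      Ideal.Quotient.mk _ (of k _ (.ofAdd (Pi.single i 1)) - 1) :=
  aeval_X _ i

variable [Fintype σ]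

theorem mk_zpowProdHom_oneAddXUnit (g : Multiplicative (σ → ℤ)) :
    Ideal.Quotient.mk ((idealOfVars σ k).map (Ideal.Quotient.mk (idealOfVars σ k ^ n)))
      (zpowProdHom (oneAddXUnit k σ n) g : TruncatedMvPolynomial k σ n) = 1 := by
  let K := (idealOfVars σ k).map (Ideal.Quotient.mk (idealOfVars σ k ^ n))
  have hK : (Ideal.Quotient.mk K).toMonoidHom.comp
      ((Units.coeHom _).comp (zpowProdHom (oneAddXUnit k σ n))) = 1 := by
    refine MonoidHom.ext_ofAdd_single (M := _ ⧸ K) fun i => ?_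
    simpa [zpowProdHom_ofAdd_single, val_oneAddXUnit, Ideal.Quotient.eq_zero_iff_mem] using
      Ideal.mem_map_of_mem _ (Ideal.subset_span (Set.mem_range_self i))
  exact congr($hK g)

theorem map_augmentationIdeal_toTruncatedMvPolynomial_le :
    (augmentationIdeal k (Multiplicative (σ → ℤ))).map (toTruncatedMvPolynomial k σ n) ≤
      (idealOfVars σ k).map (Ideal.Quotient.mk (idealOfVars σ k ^ n)) :=
  Ideal.map_le_iff_le_comap.mpr fun _ hx => Ideal.mem_comap.mpr <|
    lift_mem_of_mem_augmentationIdeal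
      (φ := (Units.coeHom _).comp (zpowProdHom (oneAddXUnit k σ n)))
      (mk_zpowProdHom_oneAddXUnit k σ n) hx

noncomputable def truncatedToMvPolynomial :
    TruncatedGroupAlgebra k σ n →ₐ[k] TruncatedMvPolynomial k σ n :=
  Ideal.Quotient.liftₐ _ (toTruncatedMvPolynomial k σ n) fun _ ha =>
    Ideal.pow_le_ker_of_map_le_map_mk (map_augmentationIdeal_toTruncatedMvPolynomial_le k σ n) ha

theorem truncatedToMvPolynomial_mk (x : MonoidAlgebra k (Multiplicative (σ → ℤ))) :
    truncatedToMvPolynomial k σ n (Ideal.Quotient.mk _ x) = toTruncatedMvPolynomial k σ n x :=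
  rfl

theorem truncatedToMvPolynomial_comp_truncatedToGroupAlgebra :
    (truncatedToMvPolynomial k σ n).comp (truncatedToGroupAlgebra k σ n) = AlgHom.id k _ :=
  Ideal.Quotient.algHom_ext k <| MvPolynomial.algHom_ext fun i => by
    simp only [AlgHom.comp_apply, Ideal.Quotient.mkₐ_eq_mk, truncatedToGroupAlgebra_mk_X,
      truncatedToMvPolynomial_mk, map_sub, map_one, toTruncatedMvPolynomial_of,
      zpowProdHom_ofAdd_single, val_oneAddXUnit, add_sub_cancel_left, AlgHom.id_apply]

theorem truncatedToGroupAlgebra_comp_truncatedToMvPolynomial :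
    (truncatedToGroupAlgebra k σ n).comp (truncatedToMvPolynomial k σ n) = AlgHom.id k _ := by
  have hof : (truncatedToGroupAlgebra k σ n).toMonoidHom.comp
      ((Units.coeHom _).comp (zpowProdHom (oneAddXUnit k σ n))) =
      (Ideal.Quotient.mk _).toMonoidHom.comp (of k (Multiplicative (σ → ℤ))) := by
    refine MonoidHom.ext_ofAdd_single fun i => ?_
    simp [truncatedToGroupAlgebra_mk_X, zpowProdHom_ofAdd_single, val_oneAddXUnit]
  refine Ideal.Quotient.algHom_ext k <| algHom_ext (fun g => ?_) (Subsingleton.elim _ _)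
  simpa [truncatedToMvPolynomial_mk, ← of_apply, toTruncatedMvPolynomial_of] using congr($hof g)

noncomputable def truncatedGroupAlgebraEquiv :
    TruncatedGroupAlgebra k σ n ≃ₐ[k] TruncatedMvPolynomial k σ n :=
  AlgEquiv.ofAlgHom _ _ (truncatedToMvPolynomial_comp_truncatedToGroupAlgebra k σ n)
    (truncatedToGroupAlgebra_comp_truncatedToMvPolynomial k σ n)

end TruncatedAlgebras

theorem stmt_14_general {k : Type*} [CommRing k] (N d : ℕ) :
    Nonempty (Module.Basis (Fin (∑ j ∈ Finset.range (d + 1), (N + j - 1).choose j)) k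
      (MonoidAlgebra k (Multiplicative (Fin N → ℤ)) ⧸
        augPow k (Multiplicative (Fin N → ℤ)) (d + 1))) := by
  have hpow : augPow k (Multiplicative (Fin N → ℤ)) (d + 1) =
      Submodule.restrictScalars k (MonoidAlgebra.augmentationIdeal k _ ^ (d + 1)) :=
    (Submodule.restrictScalars_pow d.succ_ne_zero).symm
  let e := Submodule.quotEquivOfEq _ _ hpow ≪≫ₗ Submodule.Quotient.restrictScalarsEquiv k _ ≪≫ₗ
    (truncatedGroupAlgebraEquiv k (Fin N) (d + 1)).toLinearEquiv
  have := (Finsupp.finite_of_degree_le (σ := Fin N) d).to_subtype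
  have hcard : Nat.card {x : Fin N →₀ ℕ | x.degree ≤ d} =
      ∑ j ∈ Finset.range (d + 1), (N + j - 1).choose j := by
    simpa using Finsupp.natCard_degree_le (Fin N) d
  exact ⟨((basisQuotientPowIdealOfVars (Fin N) k d).map e.symm).reindex
    ((Finite.equivFin _).trans (finCongr hcard))⟩

/-- For `G = ℤ^N` (`N ≥ 1`, written multiplicatively) and every `d`,
the quotient `k[G] / I_k(G)^{d+1}` is a free `k`-module of rank `∑_{j=0}^d C(N+j-1, j)`. -/
theorem stmt_14 {k : Type*} [CommRing k] (N d : ℕ) (hN : 1 ≤ N) :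
    Nonempty (Module.Basis (Fin (∑ j ∈ Finset.range (d + 1), (N + j - 1).choose j)) k
      (MonoidAlgebra k (Multiplicative (Fin N → ℤ)) ⧸
        augPow k (Multiplicative (Fin N → ℤ)) (d + 1))) :=
  stmt_14_general N d
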